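/- The number of n×n diagonalizable matrices over F_q equals the sum over all ordered q-tuples (n_1, ..., n_q) of nonnegative integers with n_1 + ⋯ + n_q = n of γ_n / (γ_{n_1} ⋯ γ_{n_q}), where γ_m = |GL_m(F_q)| and γ_0 = 1. -/
import Mathlib


/-- The order of `GL_m(F_q)`. -/
def gma (q m : ℕ) : ℕ := ∏ i ∈ Finset.range m, (q ^ m - q ^ i)


open Matrix MulAction

/-- Units of a product of monoids. -/
def myPiUnits {ι : Type*} {M : ι → Type*} [∀ i, Monoid (M i)] :
    (∀ i, M i)ˣ ≃ ∀ i, (M i)ˣ where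
  toFun u i := ⟨u.val i, u.inv i, congrFun u.val_inv i, congrFun u.inv_val i⟩
  invFun f := ⟨fun i => f i, fun i => ↑(f i)⁻¹,
    funext fun i => (f i).val_inv, funext fun i => (f i).inv_val⟩
  left_inv u := Units.ext rfl
  right_inv f := funext fun i => Units.ext rfl

section Comm

variable {κ : Type*} [Fintype κ] [DecidableEq κ] {m : κ → Type*}
  [∀ k, Fintype (m k)] [∀ k, DecidableEq (m k)] {F : Type*} [Field F]

lemma commute_diag_iff (w : κ → F) (hw : Function.Injective w)
    (M : Matrix (Σ k, m k) (Σ k, m k) F) :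
    Commute M (Matrix.diagonal (fun x : Σ k, m k => w x.1)) ↔
      ∃ B : ∀ k, Matrix (m k) (m k) F, Matrix.blockDiagonal' B = M := by
  constructor
  · intro h
    refine ⟨fun k => Matrix.of fun a b => M ⟨k, a⟩ ⟨k, b⟩, ?_⟩
    ext ⟨k, a⟩ ⟨l, b⟩
    rcases eq_or_ne k l with rfl | hkl
    · simp [Matrix.blockDiagonal'_apply_eq]
    · rw [Matrix.blockDiagonal'_apply_ne _ _ _ hkl]
      have h0 := congrFun (congrFun h.eq ⟨k, a⟩) ⟨l, b⟩
      rw [Matrix.mul_diagonal, Matrix.diagonal_mul] at h0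
      have hne : w l - w k ≠ 0 := sub_ne_zero.mpr (fun hh => hkl (hw hh).symm)
      have h2 : M ⟨k,a⟩ ⟨l,b⟩ * (w l - w k) = 0 := by
        rw [mul_sub, h0]; ring
      rcases mul_eq_zero.mp h2 with h1 | h1
      · exact h1.symm
      · exact absurd h1 hne
  · rintro ⟨B, rfl⟩
    have : (Matrix.diagonal (fun x : Σ k, m k => w x.1)) =
        Matrix.blockDiagonal' (fun k => Matrix.diagonal fun _ : m k => w k) := by
      rw [Matrix.blockDiagonal'_diagonal]
    have hcomm : (fun k => B k * Matrix.diagonal fun _ : m k => w k) =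
        fun k => (Matrix.diagonal fun _ : m k => w k) * B k := by
      funext k
      exact Matrix.ext fun a b => by
        rw [Matrix.mul_diagonal, Matrix.diagonal_mul, mul_comm]
    rw [Commute, SemiconjBy, this, ← Matrix.blockDiagonal'_mul, ← Matrix.blockDiagonal'_mul,
      hcomm]

lemma card_commutant_units (w : κ → F) (hw : Function.Injective w) :
    Nat.card {x : (Matrix (Σ k, m k) (Σ k, m k) F)ˣ //
        Commute (x : Matrix (Σ k, m k) (Σ k, m k) F)
          (Matrix.diagonal (fun x : Σ k, m k => w x.1))} =
      ∏ k, Nat.card (Matrix (m k) (m k) F)ˣ := by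
  have hinj : Function.Injective (Matrix.blockDiagonal'RingHom m F :
      (∀ k, Matrix (m k) (m k) F) →+* Matrix (Σ k, m k) (Σ k, m k) F) :=
    Matrix.blockDiagonal'_injective
  set Φ := (Matrix.blockDiagonal'RingHom m F :
      (∀ k, Matrix (m k) (m k) F) →+* Matrix (Σ k, m k) (Σ k, m k) F) with hΦ
  have key : Function.Bijective (fun u : (∀ k, Matrix (m k) (m k) F)ˣ =>
      (⟨Units.map Φ.toMonoidHom u, by
        rw [commute_diag_iff w hw]; exact ⟨u.val, rfl⟩⟩ :
        {x : (Matrix (Σ k, m k) (Σ k, m k) F)ˣ //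
          Commute (x : Matrix (Σ k, m k) (Σ k, m k) F)
            (Matrix.diagonal (fun x : Σ k, m k => w x.1))})) := by
    constructor
    · intro u v huv
      apply Units.ext
      apply hinj
      exact congrArg (fun z => ((z : {x : (Matrix (Σ k, m k) (Σ k, m k) F)ˣ // _}) :
        (Matrix (Σ k, m k) (Σ k, m k) F)ˣ).val) huv
    · rintro ⟨x, hx⟩
      obtain ⟨B, hB⟩ := (commute_diag_iff w hw _).mp hx
      obtain ⟨B', hB'⟩ := (commute_diag_iff w hw _).mp hx.units_inv_left
      have h1 : B * B' = 1 := by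
        apply hinj
        rw [_root_.map_mul, _root_.map_one]
        show Matrix.blockDiagonal' B * Matrix.blockDiagonal' B' = 1
        rw [hB, hB']
        exact x.val_inv
      have h2 : B' * B = 1 := by
        apply hinj
        rw [_root_.map_mul, _root_.map_one]
        show Matrix.blockDiagonal' B' * Matrix.blockDiagonal' B = 1
        rw [hB, hB']
        exact x.inv_val
      refine ⟨⟨B, B', h1, h2⟩, ?_⟩
      apply Subtype.ext
      apply Units.ext
      exact hB
  rw [← Nat.card_eq_of_bijective _ key, Nat.card_congr (myPiUnits), Nat.card_pi]

end Comm

section Stab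

variable {F : Type} [Field F] [Fintype F] {n t : ℕ}

lemma card_stabilizer_diag (c : Fin t → ℕ) (σ : Fin n ≃ Σ i : Fin t, Fin (c i))
    (w : Fin t → F) (hw : Function.Injective w) :
    Nat.card (stabilizer (ConjAct (GL (Fin n) F))
        (Matrix.diagonal fun k => w (σ k).1)) =
      ∏ i, Nat.card (GL (Fin (c i)) F) := by
  classical
  set d : Fin n → F := fun k => w (σ k).1 with hd
  set e : Matrix (Fin n) (Fin n) F ≃ₐ[F] Matrix (Σ i : Fin t, Fin (c i))
      (Σ i : Fin t, Fin (c i)) F := Matrix.reindexAlgEquiv F F σ with he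
  have hDι : e (Matrix.diagonal d) =
      Matrix.diagonal (fun x : Σ i : Fin t, Fin (c i) => w x.1) := by
    rw [he, Matrix.reindexAlgEquiv_apply, Matrix.reindex_apply,
      Matrix.submatrix_diagonal_equiv]
    have hfun : (fun k : Fin n => w (σ k).1) ∘ ⇑σ.symm =
        fun x : Σ i : Fin t, Fin (c i) => w x.1 := by
      funext x; simp
    rw [hd, hfun]
  set E : ConjAct (GL (Fin n) F) ≃ (Matrix (Σ i : Fin t, Fin (c i))
      (Σ i : Fin t, Fin (c i)) F)ˣ :=
    (ConjAct.ofConjAct (G := GL (Fin n) F)).toEquiv.trans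
      (Units.mapEquiv e.toMulEquiv).toEquiv with hE
  have key : ∀ g : ConjAct (GL (Fin n) F),
      g ∈ stabilizer (ConjAct (GL (Fin n) F)) (Matrix.diagonal d) ↔
      Commute ((E g : (Matrix (Σ i : Fin t, Fin (c i)) (Σ i : Fin t, Fin (c i)) F)ˣ) :
          Matrix (Σ i : Fin t, Fin (c i)) (Σ i : Fin t, Fin (c i)) F)
        (Matrix.diagonal (fun x : Σ i : Fin t, Fin (c i) => w x.1)) := by
    intro g
    rw [MulAction.mem_stabilizer_iff, ConjAct.units_smul_def,
      Units.mul_inv_eq_iff_eq_mul]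
    have hcoe : ((E g : (Matrix (Σ i : Fin t, Fin (c i)) (Σ i : Fin t, Fin (c i)) F)ˣ) :
        Matrix (Σ i : Fin t, Fin (c i)) (Σ i : Fin t, Fin (c i)) F) =
        e ((ConjAct.ofConjAct g : GL (Fin n) F) : Matrix (Fin n) (Fin n) F) := by
      rw [hE]
      simp [Units.coe_mapEquiv]
    rw [Commute, SemiconjBy, hcoe, ← hDι, ← _root_.map_mul, ← _root_.map_mul,
      e.injective.eq_iff]
  rw [Nat.card_congr (Equiv.subtypeEquiv (p := fun g => g ∈ stabilizer
      (ConjAct (GL (Fin n) F)) (Matrix.diagonal d))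
      (q := fun x : (Matrix (Σ i : Fin t, Fin (c i)) (Σ i : Fin t, Fin (c i)) F)ˣ =>
        Commute (x : Matrix (Σ i : Fin t, Fin (c i)) (Σ i : Fin t, Fin (c i)) F)
          (Matrix.diagonal (fun x : Σ i : Fin t, Fin (c i) => w x.1))) E key),
    card_commutant_units w hw]

lemma orbit_card_mul (c : Fin t → ℕ) (σ : Fin n ≃ Σ i : Fin t, Fin (c i))
    (w : Fin t → F) (hw : Function.Injective w) :
    Nat.card (orbit (ConjAct (GL (Fin n) F)) (Matrix.diagonal fun k => w (σ k).1)) *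
      ∏ i, Nat.card (GL (Fin (c i)) F) = Nat.card (GL (Fin n) F) := by
  rw [← card_stabilizer_diag c σ w hw]
  have h := Nat.card_congr (MulAction.orbitProdStabilizerEquivGroup
    (ConjAct (GL (Fin n) F)) (Matrix.diagonal fun k => w (σ k).1))
  rw [Nat.card_prod] at h
  rw [h]
  exact Nat.card_congr ConjAct.toConjAct.toEquiv.symm

end Stab

section PermConj

variable {F : Type} [Field F] {n : ℕ}

lemma diag_perm_mem_orbit (d : Fin n → F) (π : Equiv.Perm (Fin n)) :
    Matrix.diagonal (fun k => d (π k)) ∈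
      orbit (ConjAct (GL (Fin n) F)) (Matrix.diagonal d) := by
  classical
  set P : Matrix (Fin n) (Fin n) F := π.toPEquiv.toMatrix with hP
  set P' : Matrix (Fin n) (Fin n) F := π.symm.toPEquiv.toMatrix with hP'
  have hPP' : P * P' = 1 := by
    rw [hP, hP', ← PEquiv.toMatrix_trans, ← Equiv.toPEquiv_trans,
      Equiv.self_trans_symm, Equiv.toPEquiv_refl, PEquiv.toMatrix_refl]
  have hP'P : P' * P = 1 := by
    rw [hP, hP', ← PEquiv.toMatrix_trans, ← Equiv.toPEquiv_trans,
      Equiv.symm_trans_self, Equiv.toPEquiv_refl, PEquiv.toMatrix_refl]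
  refine MulAction.mem_orbit_iff.mpr ⟨ConjAct.toConjAct (⟨P, P', hPP', hP'P⟩ : GL (Fin n) F), ?_⟩
  rw [ConjAct.units_smul_def, ConjAct.ofConjAct_toConjAct, Units.mul_inv_eq_iff_eq_mul]
  show P * Matrix.diagonal d = Matrix.diagonal (fun k => d (π k)) * P
  rw [hP, PEquiv.toMatrix_toPEquiv_mul, PEquiv.mul_toMatrix_toPEquiv]
  ext i j
  rcases eq_or_ne (π i) j with h | h
  · subst h
    simp [Matrix.diagonal_apply]
  · have h2 : i ≠ π.symm j := fun hh => h (by rw [hh]; simp)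
    simp [Matrix.diagonal_apply, h, h2]

lemma multiplicity_eq_of_orbit [Fintype F] [DecidableEq F] (d d' : Fin n → F)
    (h : Matrix.diagonal d' ∈ orbit (ConjAct (GL (Fin n) F)) (Matrix.diagonal d)) (α : F) :
    Fintype.card {k // d' k = α} = Fintype.card {k // d k = α} := by
  classical
  obtain ⟨g, hg⟩ := h
  set u : GL (Fin n) F := ConjAct.ofConjAct g with hu
  have hrank : ∀ dd : Fin n → F, (Matrix.diagonal dd - α • 1).rank =
      Fintype.card {k // dd k ≠ α} := by
    intro dd
    rw [Matrix.smul_one_eq_diagonal, Matrix.diagonal_sub, Matrix.rank_diagonal]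
    exact Fintype.card_congr (Equiv.subtypeEquivRight fun k => by rw [sub_ne_zero])
  have hg' : (u : Matrix (Fin n) (Fin n) F) * Matrix.diagonal d *
      ((u⁻¹ : GL (Fin n) F) : Matrix (Fin n) (Fin n) F) = Matrix.diagonal d' := by
    rw [hu]
    simpa [ConjAct.units_smul_def] using hg
  have hscal : (u : Matrix (Fin n) (Fin n) F) * (α • 1) *
      ((u⁻¹ : GL (Fin n) F) : Matrix (Fin n) (Fin n) F) = α • 1 := by
    rw [mul_smul_comm, Matrix.mul_one, Matrix.smul_mul, Units.mul_inv]
  have h2 : Matrix.diagonal d' - α • (1 : Matrix (Fin n) (Fin n) F) =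
      (u : Matrix (Fin n) (Fin n) F) * (Matrix.diagonal d - α • 1) *
        ((u⁻¹ : GL (Fin n) F) : Matrix (Fin n) (Fin n) F) := by
    rw [← hg', Matrix.mul_sub, Matrix.sub_mul, hscal]
  have hdet : IsUnit ((u : Matrix (Fin n) (Fin n) F)).det :=
    (Matrix.isUnit_iff_isUnit_det _).mp u.isUnit
  have hdet' : IsUnit (((u⁻¹ : GL (Fin n) F) : Matrix (Fin n) (Fin n) F)).det :=
    (Matrix.isUnit_iff_isUnit_det _).mp (u⁻¹).isUnit
  have h3 : Fintype.card {k // d' k ≠ α} = Fintype.card {k // d k ≠ α} := by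
    rw [← hrank, ← hrank, h2, Matrix.rank_mul_eq_left_of_isUnit_det _ _ hdet',
      Matrix.rank_mul_eq_right_of_isUnit_det _ _ hdet]
  have c1 := Fintype.card_subtype_compl (fun k : Fin n => d' k = α)
  have c2 := Fintype.card_subtype_compl (fun k : Fin n => d k = α)
  have b1 : Fintype.card {k // d' k = α} ≤ Fintype.card (Fin n) :=
    Fintype.card_subtype_le _
  have b2 : Fintype.card {k // d k = α} ≤ Fintype.card (Fin n) :=
    Fintype.card_subtype_le _
  have e1 : Fintype.card {k // d' k ≠ α} = Fintype.card {k : Fin n // ¬ d' k = α} := rfl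
  have e2 : Fintype.card {k // d k ≠ α} = Fintype.card {k : Fin n // ¬ d k = α} := rfl
  rw [e1, e2, c1, c2] at h3
  omega

end PermConj

lemma card_sigma_fiber_fst {t : ℕ} (β : Fin t → Type*) [∀ i, Fintype (β i)] (i : Fin t) :
    Fintype.card {x : Σ j, β j // x.1 = i} = Fintype.card (β i) := by
  refine Fintype.card_congr ⟨fun p => p.2 ▸ p.1.2, fun b => ⟨⟨i, b⟩, rfl⟩, ?_, ?_⟩
  · rintro ⟨⟨j, b⟩, rfl⟩
    rfl
  · intro b
    rfl


section Main

variable {F : Type} [Field F] [Fintype F] {n q : ℕ}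

lemma card_GL_eq_gma (hF : Fintype.card F = q) (m : ℕ) :
    Nat.card (GL (Fin m) F) = gma q m := by
  rw [Matrix.card_GL_field, gma, hF, ← Fin.prod_univ_eq_prod_range]

lemma gma_pos (hq : 1 < q) (m : ℕ) : 0 < gma q m := by
  apply Finset.prod_pos
  intro i hi
  have : q ^ i < q ^ m := Nat.pow_lt_pow_right hq (Finset.mem_range.mp hi)
  omega

end Main

/-- The number of `n × n` diagonalizable matrices over `F_q` equals the sum over
ordered `q`-tuples `(n_1, …, n_q)` of nonnegative integers with `n_1 + ⋯ + n_q = n`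
of `γ_n / (γ_{n_1} ⋯ γ_{n_q})`. -/
theorem card_diagonalizable_matrices (q n : ℕ) (hn : 0 < n)
    (F : Type) [Field F] [Fintype F] (hF : Fintype.card F = q) :
    (Nat.card {A : Matrix (Fin n) (Fin n) F //
        ∃ g : GL (Fin n) F, ∃ d : Fin n → F,
          A = g * Matrix.diagonal d * (g⁻¹ : GL (Fin n) F)} : ℚ) =
      ∑ c ∈ Finset.Nat.antidiagonalTuple q n,
        (gma q n : ℚ) / ∏ i, (gma q (c i) : ℚ) := by
  classical
  have hq : 1 < q := hF ▸ Fintype.one_lt_card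
  set eF : F ≃ Fin q := Fintype.equivFinOfCardEq hF with heF
  set w : Fin q → F := fun i => eF.symm i with hwdef
  have hw : Function.Injective w := fun a b h => by
    simpa using eF.symm.injective h
  set t : Finset (Fin q → ℕ) := Finset.Nat.antidiagonalTuple q n with ht
  have hmemt : ∀ c : Fin q → ℕ, c ∈ t ↔ ∑ i, c i = n := fun c =>
    Finset.Nat.mem_antidiagonalTuple
  have hcardsig : ∀ (c : Fin q → ℕ), ∑ i, c i = n →
      Fintype.card (Σ i : Fin q, Fin (c i)) = Fintype.card (Fin n) := by
    intro c hc; simp [hc]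
  set rep : (c : Fin q → ℕ) → (∑ i, c i = n) → (Fin n ≃ Σ i : Fin q, Fin (c i)) :=
    fun c hc => (Fintype.equivOfCardEq (hcardsig c hc)).symm with hrep
  set O : (Fin q → ℕ) → Set (Matrix (Fin n) (Fin n) F) := fun c =>
    if hc : ∑ i, c i = n then
      MulAction.orbit (ConjAct (GL (Fin n) F))
        (Matrix.diagonal fun k => w ((rep c hc) k).1)
    else ∅
    with hO
  have hOc : ∀ (c : Fin q → ℕ) (hc : ∑ i, c i = n),
      O c = MulAction.orbit (ConjAct (GL (Fin n) F))
        (Matrix.diagonal fun k => w ((rep c hc) k).1) := fun c hc => dif_pos hc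
  set S : Set (Matrix (Fin n) (Fin n) F) :=
    {A | ∃ g : GL (Fin n) F, ∃ d : Fin n → F,
      A = g * Matrix.diagonal d * (g⁻¹ : GL (Fin n) F)} with hS
  -- multiplicities of the representatives
  have hmult : ∀ (c : Fin q → ℕ) (hc : ∑ i, c i = n) (i : Fin q),
      Fintype.card {k // w ((rep c hc) k).1 = w i} = c i := by
    intro c hc i
    have e1 : {k // w ((rep c hc) k).1 = w i} ≃ {x : Σ j : Fin q, Fin (c j) // x.1 = i} :=
      Equiv.subtypeEquiv (rep c hc) (fun k => by rw [hw.eq_iff])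
    rw [Fintype.card_congr e1, card_sigma_fiber_fst]
    simp
  -- covering
  have hcov : ∀ A : Matrix (Fin n) (Fin n) F, A ∈ S ↔ ∃ c ∈ t, A ∈ O c := by
    intro A
    constructor
    · rintro ⟨g, d, rfl⟩
      set f : Fin n → Fin q := fun k => eF (d k) with hfdef
      set c : Fin q → ℕ := fun i => Fintype.card {k // f k = i} with hcdef
      have hc : ∑ i, c i = n := by
        have h1 := Fintype.card_congr (Equiv.sigmaFiberEquiv f)
        simpa [Fintype.card_sigma, hcdef] using h1
      set σ := rep c hc with hσ
      set τ : Fin n ≃ Σ i : Fin q, Fin (c i) :=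
        (Equiv.sigmaFiberEquiv f).symm.trans
          (Equiv.sigmaCongrRight fun i =>
            Fintype.equivFinOfCardEq (congrFun hcdef i).symm) with hτ
      have hτ1 : ∀ k, (τ k).1 = f k := fun k => rfl
      set π : Equiv.Perm (Fin n) := τ.trans σ.symm with hπ
      have hdeq : (fun k => w ((σ (π k)).1)) = d := by
        funext k
        rw [hπ]
        simp only [Equiv.trans_apply, Equiv.apply_symm_apply]
        rw [hτ1 k, hfdef, hwdef]
        simp
      refine ⟨c, (hmemt c).mpr hc, ?_⟩
      rw [hOc c hc, ← hσ]
      have h2 : Matrix.diagonal d ∈ MulAction.orbit (ConjAct (GL (Fin n) F))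
          (Matrix.diagonal fun k => w ((σ k).1)) := by
        have h3 := diag_perm_mem_orbit (F := F) (fun k => w ((σ k).1)) π
        rwa [hdeq] at h3
      have h4 : (g : Matrix (Fin n) (Fin n) F) * Matrix.diagonal d *
          ((g⁻¹ : GL (Fin n) F) : Matrix (Fin n) (Fin n) F) ∈
          MulAction.orbit (ConjAct (GL (Fin n) F)) (Matrix.diagonal d) := by
        refine MulAction.mem_orbit_iff.mpr ⟨ConjAct.toConjAct g, ?_⟩
        rw [ConjAct.units_smul_def, ConjAct.ofConjAct_toConjAct]
      rw [← MulAction.orbit_eq_iff.mpr h2]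
      exact h4
    · rintro ⟨c, hct, hA⟩
      have hc := (hmemt c).mp hct
      rw [hOc c hc] at hA
      obtain ⟨g, rfl⟩ := hA
      refine ⟨ConjAct.ofConjAct g, fun k => w ((rep c hc) k).1, ?_⟩
      show g • _ = _
      rw [ConjAct.units_smul_def]
  -- disjointness
  have hdisj : ∀ c ∈ t, ∀ c' ∈ t, c ≠ c' → Disjoint (O c) (O c') := by
    intro c hct c' hct' hne
    have hc := (hmemt c).mp hct
    have hc' := (hmemt c').mp hct'
    rw [Set.disjoint_left]
    intro A hA hA'
    rw [hOc c hc] at hA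
    rw [hOc c' hc'] at hA'
    have horb : MulAction.orbit (ConjAct (GL (Fin n) F))
        (Matrix.diagonal fun k => w ((rep c' hc') k).1) =
        MulAction.orbit (ConjAct (GL (Fin n) F))
          (Matrix.diagonal fun k => w ((rep c hc) k).1) := by
      rw [← MulAction.orbit_eq_iff.mpr hA, ← MulAction.orbit_eq_iff.mpr hA']
    have hmem : Matrix.diagonal (fun k => w ((rep c' hc') k).1) ∈
        MulAction.orbit (ConjAct (GL (Fin n) F))
          (Matrix.diagonal fun k => w ((rep c hc) k).1) := by
      rw [← horb]; exact MulAction.mem_orbit_self _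
    apply hne
    funext i
    have := multiplicity_eq_of_orbit _ _ hmem (w i)
    rw [hmult c hc i, hmult c' hc' i] at this
    omega
  -- counting
  have hcardS : Nat.card ↥S = ∑ c ∈ t, Nat.card ↥(O c) := by
    have h1 : S.toFinset = t.biUnion fun c => (O c).toFinset := by
      ext A
      simp only [Set.mem_toFinset, Finset.mem_biUnion]
      exact hcov A
    rw [Nat.card_eq_fintype_card, ← Set.toFinset_card, h1,
      Finset.card_biUnion (fun x hx y hy hxy =>
        Set.disjoint_toFinset.mpr (hdisj x hx y hy hxy))]
    exact Finset.sum_congr rfl fun c _ => by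
      rw [Set.toFinset_card, Nat.card_eq_fintype_card]
  -- per-orbit cardinality
  have horbcard : ∀ c ∈ t, (Nat.card ↥(O c) : ℚ) =
      (gma q n : ℚ) / ∏ i, (gma q (c i) : ℚ) := by
    intro c hct
    have hc := (hmemt c).mp hct
    have hmain := orbit_card_mul c (rep c hc) w hw
    rw [card_GL_eq_gma hF] at hmain
    have hprod : ∏ i, Nat.card (GL (Fin (c i)) F) = ∏ i, gma q (c i) :=
      Finset.prod_congr rfl fun i _ => card_GL_eq_gma hF (c i)
    rw [hprod] at hmain
    have hne : (∏ i, (gma q (c i) : ℚ)) ≠ 0 := by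
      apply Finset.prod_ne_zero_iff.mpr
      intro i _
      exact_mod_cast (gma_pos hq (c i)).ne'
    rw [hOc c hc, eq_div_iff hne]
    exact_mod_cast hmain
  show (Nat.card ↥S : ℚ) = _
  rw [hcardS]
  push_cast
  exact Finset.sum_congr rfl fun c hct => horbcard c hct
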